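/- Fix p > q > 0 and let θ = log(p/q). For a node v with label Y_v ∈ {−1, 1} and neighbor labels Y_u ∈ {−1, 1}, the MAP rule over binary labels satisfies: argmax over Y_v of [ log P_{Y_v}(X_v) + Σ_{u∈N_v} max over Y_u of ( log P_{Y_u}(X_u) + (1 + Y_v Y_u)/2 · log p + (1 − Y_v Y_u)/2 · log q ) ] equals the sign of [ ℓ(X_v) + Σ_{u∈N_v} φ(ℓ(X_u); θ) ] whenever this quantity is nonzero, where ℓ(x) = log(P₁(x)/P₋₁(x)) and φ(a; θ) = ReLU(a + θ) − ReLU(a − θ) − θ. -/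
import Mathlib


open Real Finset

theorem stmt_18 {α ι : Type*} (p q : ℝ) (hq : 0 < q) (hpq : q < p)
    (P₁ Pm1 : α → ℝ) (hP₁ : ∀ x, 0 < P₁ x) (hPm1 : ∀ x, 0 < Pm1 x)
    (Xv : α) (N : Finset ι) (X : ι → α)
    (θ : ℝ) (hθ : θ = Real.log (p / q))
    (ℓ : α → ℝ) (hℓ : ∀ x, ℓ x = Real.log (P₁ x / Pm1 x))
    (φ : ℝ → ℝ) (hφ : ∀ a, φ a = max (a + θ) 0 - max (a - θ) 0 - θ)
    (F : ℝ → ℝ)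
    (hF : ∀ yv : ℝ, F yv =
      Real.log ((if yv = 1 then P₁ else Pm1) Xv) +
        ∑ u ∈ N,
          max (Real.log (P₁ (X u)) +
              (1 + yv * 1) / 2 * Real.log p + (1 - yv * 1) / 2 * Real.log q)
            (Real.log (Pm1 (X u)) +
              (1 + yv * (-1)) / 2 * Real.log p + (1 - yv * (-1)) / 2 * Real.log q))
    (T : ℝ) (hT : T = ℓ Xv + ∑ u ∈ N, φ (ℓ (X u))) :
    (0 < T → F (-1) < F 1) ∧ (T < 0 → F 1 < F (-1)) := by
  have hp : 0 < p := hq.trans hpq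
  have hlp : Real.log (p / q) = Real.log p - Real.log q :=
    Real.log_div hp.ne' hq.ne'
  have hterm : ∀ u : ι,
      (max (Real.log (P₁ (X u)) +
              (1 + (1:ℝ) * 1) / 2 * Real.log p + (1 - (1:ℝ) * 1) / 2 * Real.log q)
            (Real.log (Pm1 (X u)) +
              (1 + (1:ℝ) * (-1)) / 2 * Real.log p + (1 - (1:ℝ) * (-1)) / 2 * Real.log q))
      - (max (Real.log (P₁ (X u)) +
              (1 + (-1:ℝ) * 1) / 2 * Real.log p + (1 - (-1:ℝ) * 1) / 2 * Real.log q)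
            (Real.log (Pm1 (X u)) +
              (1 + (-1:ℝ) * (-1)) / 2 * Real.log p + (1 - (-1:ℝ) * (-1)) / 2 * Real.log q))
      = φ (ℓ (X u)) := by
    intro u
    rw [hφ, hℓ, Real.log_div (hP₁ _).ne' (hPm1 _).ne', hθ, hlp]
    simp only [max_def]
    split_ifs <;> ring_nf <;> linarith
  have key : F 1 - F (-1) = T := by
    rw [hF 1, hF (-1), hT, if_pos rfl, if_neg (by norm_num : ¬((-1:ℝ) = 1)),
      hℓ, Real.log_div (hP₁ Xv).ne' (hPm1 Xv).ne']
    have hs : ∑ u ∈ N,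
        ((max (Real.log (P₁ (X u)) +
              (1 + (1:ℝ) * 1) / 2 * Real.log p + (1 - (1:ℝ) * 1) / 2 * Real.log q)
            (Real.log (Pm1 (X u)) +
              (1 + (1:ℝ) * (-1)) / 2 * Real.log p + (1 - (1:ℝ) * (-1)) / 2 * Real.log q))
        - (max (Real.log (P₁ (X u)) +
              (1 + (-1:ℝ) * 1) / 2 * Real.log p + (1 - (-1:ℝ) * 1) / 2 * Real.log q)
            (Real.log (Pm1 (X u)) +
              (1 + (-1:ℝ) * (-1)) / 2 * Real.log p + (1 - (-1:ℝ) * (-1)) / 2 * Real.log q)))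
        = ∑ u ∈ N, φ (ℓ (X u)) :=
      Finset.sum_congr rfl fun u _ => hterm u
    rw [Finset.sum_sub_distrib] at hs
    linarith
  exact ⟨fun h => by linarith, fun h => by linarith⟩
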